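/- arXiv:1508.04073 — 2 statements merged into one kernel-verified Lean document; each statement's English description precedes it below -/
import Mathlib

section
/- Let D be a finite dataset of n points in the plane, sorted in increasing order by x-value, and let Q be a fixed partition of the points of D into rows (i.e., an assignment of a row label to each point). For a partition P of a set of points into columns, let H(P) denote the Shannon entropy of the probability vector whose entries are the fractions of points in each column, and let H(P,Q) denote the Shannon entropy of the probability vector whose entries are the fractions of points in each cell (column, row). For natural numbers m and l, define F(m,l) as the maximum of H(P) - H(P,Q) over all partitions P of the first m points D(1:m) into l columns (consecutive intervals in x-order). Then for every l > 1 and every m with 1 < m ≤ n, the recursion F(m,l) = max_{1 ≤ i < m} { (i/m)·F(i,l-1) - ((m-i)/m)·H(⟨i,m⟩, Q) } holds, where H(⟨i,m⟩, Q) denotes the Shannon entropy of the probability vector whose entries are the fractions, among the points i+1, i+2, …, m, that fall into each row of Q. -/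
/-!
Cutting a partition of the first `m` points into `l` columns before its last column `[i, m)`
leaves a partition of the first `i` points into `l - 1` columns. Since
`negMulLog (x * y) = y * negMulLog x + x * negMulLog y`, measuring the frequencies of those
columns relative to `m` instead of `i` points multiplies their contribution to `H(P) - H(P,Q)`
by `i / m`, while the last column contributes `-((m - i) / m) · H(⟨i,m⟩, Q)`. Taking suprema
gives the recursion.

As `F` is an `sSup`, `F(i, l - 1)` is the junk value `0` when `i < l - 1`. Those terms are
harmless: the contribution of a last column `[i, m)` grows with `i` (removing a point from a
column changes it by a difference of two increments of the concave function `negMulLog`), and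
the partition into `l - 1` singletons followed by `[l - 1, m)` has exactly the value of its last
column. When `m < l` both sides are `0`, the right one attained at `i = m - 1`.
-/

open Finset Real

theorem ConcaveOn.map_add_sub_map_le_of_le {𝕜 : Type*} [Field 𝕜] [LinearOrder 𝕜]
    [IsStrictOrderedRing 𝕜] {s : Set 𝕜} {f : 𝕜 → 𝕜} (hf : ConcaveOn 𝕜 s f) {x y h : 𝕜}
    (hx : x ∈ s) (hyh : y + h ∈ s) (hxy : x ≤ y) (hh : 0 ≤ h) :
    f (y + h) - f y ≤ f (x + h) - f x := by
  rcases (add_nonneg (sub_nonneg.2 hxy) hh).eq_or_lt with hd | hd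
  · obtain ⟨rfl, rfl⟩ : y = x ∧ h = 0 := by constructor <;> linarith
    simp
  -- `y` and `x + h` are the convex combinations of `x` and `y + h` with swapped weights.
  have hsum : h / (y - x + h) + (y - x) / (y - x + h) = 1 := by field_simp; ring
  have hy := hf.2 hx hyh (div_nonneg hh hd.le) (div_nonneg (sub_nonneg.2 hxy) hd.le) hsum
  have hxh := hf.2 hx hyh (div_nonneg (sub_nonneg.2 hxy) hd.le) (div_nonneg hh hd.le)
    (by rw [add_comm, hsum])
  simp only [smul_eq_mul] at hy hxh
  rw [show h / (y - x + h) * x + (y - x) / (y - x + h) * (y + h) = y by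
    field_simp; ring] at hy
  rw [show (y - x) / (y - x + h) * x + h / (y - x + h) * (y + h) = x + h by
    field_simp; ring] at hxh
  linear_combination hy + hxh - (f x + f (y + h)) * hsum

theorem Real.mul_csSup_add_le {s t : Set ℝ} {a c : ℝ} (ha : 0 ≤ a) (hs : s.Nonempty)
    (hs' : BddAbove s) (ht : BddAbove t) (hst : ∀ x ∈ s, a * x + c ∈ t) :
    a * sSup s + c ≤ sSup t := by
  have hmono : Monotone fun x => a * x + c := fun x y hxy => by dsimp only; gcongr
  rw [hmono.map_csSup_of_continuousAt (by fun_prop) hs hs']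
  exact csSup_le_csSup ht (hs.image _) (Set.image_subset_iff.2 hst)

theorem Fin.card_filter_le_val_lt {n a c : ℕ} (hcn : c ≤ n) :
    #{t : Fin n | a ≤ (t : ℕ) ∧ (t : ℕ) < c} = c - a := by
  rw [← Nat.card_Ico a c, ← card_map Fin.valEmbedding]
  congr 1
  ext x
  simp only [mem_map, mem_filter, mem_univ, true_and, Fin.valEmbedding_apply, mem_Ico]
  exact ⟨fun ⟨t, ht, hx⟩ => hx ▸ ht, fun hx => ⟨⟨x, by omega⟩, hx, rfl⟩⟩

section Columns

variable {n : ℕ} {ι : Type*} [DecidableEq ι] (Q : Fin n → ι)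

def cellCard (a c : ℕ) (i : ι) : ℕ := #{t : Fin n | a ≤ (t : ℕ) ∧ (t : ℕ) < c ∧ Q t = i}

theorem cellCard_eq_succ_add {a c : ℕ} (hac : a < c) (han : a < n) (i : ι) :
    cellCard Q a c i = cellCard Q (a + 1) c i + if Q ⟨a, han⟩ = i then 1 else 0 := by
  have hsplit : univ.filter (fun t : Fin n => a ≤ (t : ℕ) ∧ (t : ℕ) < c ∧ Q t = i)
      = univ.filter (fun t : Fin n => a + 1 ≤ (t : ℕ) ∧ (t : ℕ) < c ∧ Q t = i)
        ∪ univ.filter (fun t : Fin n => (t : ℕ) = a ∧ Q t = i) := by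
    ext t
    simp only [mem_union, mem_filter, mem_univ, true_and]
    grind
  rw [cellCard, hsplit, card_union_of_disjoint (disjoint_filter.2 fun t _ h => by omega)]
  congr 1
  split_ifs with h
  · refine card_eq_one.2 ⟨⟨a, han⟩, ?_⟩
    ext t
    simp only [mem_filter, mem_univ, true_and, mem_singleton, Fin.ext_iff, and_iff_left_iff_imp]
    grind
  · exact card_eq_zero.2 (filter_eq_empty_iff.2 fun t _ ht => h (by grind))

variable [Fintype ι]

/-- The contribution of the column `[a, c)` to `H(P) - H(P,Q)` when frequencies are taken
relative to `M` points. -/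
noncomputable def columnValue (M : ℝ) (a c : ℕ) : ℝ :=
  negMulLog (((c : ℝ) - a) / M) - ∑ i, negMulLog (cellCard Q a c i / M)

variable {Q}

theorem sum_cellCard {a c : ℕ} (hcn : c ≤ n) : ∑ i, cellCard Q a c i = c - a := by
  rw [← Fin.card_filter_le_val_lt hcn,
    card_eq_sum_card_fiberwise (f := Q) (t := (univ : Finset ι)) (by simp)]
  simp only [cellCard, filter_filter, and_assoc]

theorem cellCard_le (a : ℕ) {c : ℕ} (hcn : c ≤ n) (i : ι) : cellCard Q a c i ≤ c - a :=
  sum_cellCard (Q := Q) (a := a) hcn ▸ single_le_sum (fun _ _ => Nat.zero_le _) (mem_univ i)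

theorem sum_cellCard_real {a c : ℕ} (hac : a ≤ c) (hcn : c ≤ n) :
    ∑ i, (cellCard Q a c i : ℝ) = c - a := by
  rw [← Nat.cast_sum, sum_cellCard hcn, Nat.cast_sub hac]

theorem columnValue_eq_mul {a c : ℕ} (hac : a ≤ c) (hcn : c ≤ n) (M : ℝ) {C : ℝ} (hC : C ≠ 0) :
    columnValue Q M a c = C / M * columnValue Q C a c := by
  have hscale (x : ℝ) :
      negMulLog (x / M) = C / M * negMulLog (x / C) + x / C * negMulLog (C / M) := by
    rw [← negMulLog_mul, div_mul_div_cancel₀ hC]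
  rw [columnValue, columnValue, hscale, sum_congr rfl fun i _ => hscale _, sum_add_distrib, ← mul_sum,
    ← sum_mul, ← sum_div, sum_cellCard_real hac hcn]
  ring

theorem columnValue_eq_neg_mul_sum_negMulLog {a c : ℕ} (hac : a < c) (hcn : c ≤ n) (M : ℝ) :
    columnValue Q M a c
      = -(((c : ℝ) - a) / M) * ∑ i, negMulLog (cellCard Q a c i / ((c : ℝ) - a)) := by
  have hC : (c : ℝ) - a ≠ 0 := sub_ne_zero.2 (Nat.cast_lt.2 hac).ne'
  rw [columnValue_eq_mul hac.le hcn M hC, columnValue, div_self hC, negMulLog_one]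
  ring

theorem columnValue_nonpos {a c : ℕ} (hac : a ≤ c) (hcn : c ≤ n) {M : ℝ} (hM : 0 ≤ M) :
    columnValue Q M a c ≤ 0 := by
  rcases hac.eq_or_lt with rfl | hac
  · have h0 (i : ι) : cellCard Q a a i = 0 := by simpa using cellCard_le (Q := Q) a hcn i
    simp [columnValue, h0]
  rw [columnValue_eq_neg_mul_sum_negMulLog hac hcn, neg_mul, neg_nonpos]
  have hca : (0 : ℝ) < c - a := sub_pos.2 (Nat.cast_lt.2 hac)
  refine mul_nonneg (div_nonneg hca.le hM)
    (sum_nonneg fun i _ => negMulLog_nonneg (by positivity) ?_)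
  rw [div_le_one hca, ← Nat.cast_sub hac.le, Nat.cast_le]
  exact cellCard_le a hcn i

theorem columnValue_self_succ {a : ℕ} (han : a < n) (M : ℝ) :
    columnValue Q M a (a + 1) = 0 := by
  rw [columnValue_eq_neg_mul_sum_negMulLog a.lt_succ_self han, sum_eq_zero, mul_zero]
  intro i _
  have hcell : cellCard Q a (a + 1) i ≤ 1 := by simpa using cellCard_le (Q := Q) a han i
  interval_cases cellCard Q a (a + 1) i <;> simp

theorem columnValue_le_succ_left {a c : ℕ} (hac : a < c) (hcn : c ≤ n) {M : ℝ} (hM : 0 ≤ M) :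
    columnValue Q M a c ≤ columnValue Q M (a + 1) c := by
  have han : a < n := hac.trans_le hcn
  have hrows : ∑ i, negMulLog (cellCard Q a c i / M)
        - ∑ i, negMulLog (cellCard Q (a + 1) c i / M)
      = negMulLog (cellCard Q (a + 1) c (Q ⟨a, han⟩) / M + 1 / M)
        - negMulLog (cellCard Q (a + 1) c (Q ⟨a, han⟩) / M) := by
    rw [← sum_sub_distrib, sum_eq_single (Q ⟨a, han⟩)]
    · rw [cellCard_eq_succ_add Q hac han, if_pos rfl, Nat.cast_add, Nat.cast_one, add_div]
    · intro i _ hi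
      rw [cellCard_eq_succ_add Q hac han, if_neg (Ne.symm hi), add_zero, sub_self]
    · simp
  have hcell : (cellCard Q (a + 1) c (Q ⟨a, han⟩) : ℝ) + (a + 1) ≤ c := by
    have := cellCard_le (Q := Q) (a + 1) hcn (Q ⟨a, han⟩)
    exact_mod_cast (by omega : cellCard Q (a + 1) c (Q ⟨a, han⟩) + (a + 1) ≤ c)
  have hrest : (0 : ℝ) ≤ c - (a + 1) := by
    linarith [(cellCard Q (a + 1) c (Q ⟨a, han⟩)).cast_nonneg (α := ℝ)]
  have hconc := concaveOn_negMulLog.map_add_sub_map_le_of_le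
    (Set.mem_Ici.2 (by positivity : (0 : ℝ) ≤ cellCard Q (a + 1) c (Q ⟨a, han⟩) / M))
    (Set.mem_Ici.2 (add_nonneg (div_nonneg hrest hM) (by positivity)))
    (div_le_div_of_nonneg_right (by linarith) hM) (by positivity : (0 : ℝ) ≤ 1 / M)
  rw [show ((c : ℝ) - (a + 1)) / M + 1 / M = ((c : ℝ) - a) / M by ring] at hconc
  simp only [columnValue]
  push_cast
  linarith

theorem columnValue_mono_left {a a' c : ℕ} (haa' : a ≤ a') (ha'c : a' < c) (hcn : c ≤ n)
    {M : ℝ} (hM : 0 ≤ M) : columnValue Q M a c ≤ columnValue Q M a' c := by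
  induction a', haa' using Nat.le_induction with
  | base => exact le_rfl
  | succ a' _ ih => exact (ih (by omega)).trans (columnValue_le_succ_left (by omega) hcn hM)

end Columns

section Partitions

def columnPartitions (m l : ℕ) : Set (Fin (l + 1) → ℕ) :=
  {b | StrictMono b ∧ b 0 = 0 ∧ b (Fin.last l) = m}

theorem le_of_mem_columnPartitions {m l : ℕ} {b : Fin (l + 1) → ℕ}
    (hb : b ∈ columnPartitions m l) : l ≤ m := by
  obtain ⟨hmono, -, hlast⟩ := hb
  have : #(univ.image b) ≤ #(range (m + 1)) :=
    card_le_card fun x hx => by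
      obtain ⟨j, -, rfl⟩ := mem_image.1 hx
      exact mem_range.2 (Nat.lt_succ_of_le (hlast ▸ hmono.monotone (Fin.le_last j)))
  simpa [card_image_of_injective _ hmono.injective] using this

theorem columnPartitions_eq_empty {m l : ℕ} (hml : m < l) : columnPartitions m l = ∅ :=
  Set.eq_empty_of_forall_notMem fun _ hb => (le_of_mem_columnPartitions hb).not_gt hml

theorem val_mem_columnPartitions (l : ℕ) :
    (fun j : Fin (l + 1) => (j : ℕ)) ∈ columnPartitions l l :=
  ⟨fun _ _ h => h, rfl, rfl⟩

theorem snoc_mem_columnPartitions {i m l : ℕ} {b : Fin (l + 1) → ℕ}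
    (hb : b ∈ columnPartitions i l) (him : i < m) :
    (Fin.snoc b m : Fin (l + 2) → ℕ) ∈ columnPartitions m (l + 1) := by
  obtain ⟨hmono, h0, hlast⟩ := hb
  refine ⟨?_, by rw [← Fin.castSucc_zero, Fin.snoc_castSucc, h0], Fin.snoc_last _ _⟩
  rw [Fin.strictMono_iff_lt_succ]
  intro j
  induction j using Fin.lastCases with
  | last => simpa [hlast] using him
  | cast j =>
    rw [Fin.succ_castSucc, Fin.snoc_castSucc, Fin.snoc_castSucc]
    exact hmono Fin.castSucc_lt_succ

theorem init_mem_columnPartitions {m l : ℕ} {b : Fin (l + 2) → ℕ}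
    (hb : b ∈ columnPartitions m (l + 1)) :
    Fin.init b ∈ columnPartitions (b (Fin.last l).castSucc) l ∧ b (Fin.last l).castSucc < m := by
  obtain ⟨hmono, h0, hlast⟩ := hb
  exact ⟨⟨hmono.comp Fin.strictMono_castSucc, h0, rfl⟩, hlast ▸ hmono (Fin.castSucc_lt_last _)⟩

theorem columnPartitions_nonempty {m l : ℕ} (hl : 1 ≤ l) (hlm : l ≤ m) :
    (columnPartitions m l).Nonempty := by
  obtain ⟨k, rfl⟩ : ∃ k, l = k + 1 := ⟨l - 1, by omega⟩
  exact ⟨_, snoc_mem_columnPartitions (val_mem_columnPartitions k) hlm⟩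

variable {n : ℕ} {ι : Type*} [Fintype ι] [DecidableEq ι] (Q : Fin n → ι)

noncomputable def partitionValue (M : ℝ) {l : ℕ} (b : Fin (l + 1) → ℕ) : ℝ :=
  ∑ j : Fin l, columnValue Q M (b j.castSucc) (b j.succ)

noncomputable def partitionValues (m l : ℕ) : Set ℝ :=
  partitionValue Q m '' columnPartitions m l

variable {Q}

theorem partitionValue_snoc (M : ℝ) {l : ℕ} (b : Fin (l + 1) → ℕ) (c : ℕ) :
    partitionValue Q M (Fin.snoc b c : Fin (l + 2) → ℕ)
      = partitionValue Q M b + columnValue Q M (b (Fin.last l)) c := by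
  simp only [partitionValue, Fin.sum_univ_castSucc (n := l), Fin.succ_last, Fin.snoc_last,
    Fin.succ_castSucc, Fin.snoc_castSucc]

theorem partitionValue_eq_mul {l : ℕ} {b : Fin (l + 1) → ℕ} (hb : Monotone b)
    (hbn : b (Fin.last l) ≤ n) (M : ℝ) {C : ℝ} (hC : C ≠ 0) :
    partitionValue Q M b = C / M * partitionValue Q C b := by
  rw [partitionValue, partitionValue, mul_sum]
  exact sum_congr rfl fun _ _ => columnValue_eq_mul (hb Fin.castSucc_lt_succ.le)
    ((hb (Fin.le_last _)).trans hbn) M hC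

theorem partitionValue_nonpos {l : ℕ} {b : Fin (l + 1) → ℕ} (hb : Monotone b)
    (hbn : b (Fin.last l) ≤ n) {M : ℝ} (hM : 0 ≤ M) : partitionValue Q M b ≤ 0 :=
  sum_nonpos fun _ _ => columnValue_nonpos (hb Fin.castSucc_lt_succ.le)
    ((hb (Fin.le_last _)).trans hbn) hM

theorem partitionValue_val {l : ℕ} (hln : l ≤ n) (M : ℝ) :
    partitionValue Q M (fun j : Fin (l + 1) => (j : ℕ)) = 0 :=
  sum_eq_zero fun j _ => columnValue_self_succ (j.isLt.trans_le hln) M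

theorem bddAbove_partitionValues {m l : ℕ} (hmn : m ≤ n) :
    BddAbove (partitionValues Q m l) := by
  refine ⟨0, ?_⟩
  rintro _ ⟨b, ⟨hmono, -, hlast⟩, rfl⟩
  exact partitionValue_nonpos hmono.monotone (hlast ▸ hmn) m.cast_nonneg

theorem mem_partitionValues_succ_iff {m l : ℕ} (hl : 1 ≤ l) (hmn : m ≤ n) {v : ℝ} :
    v ∈ partitionValues Q m (l + 1) ↔
      ∃ i ∈ Ico 1 m, ∃ w ∈ partitionValues Q i l, v = i / m * w + columnValue Q m i m := by
  constructor
  · rintro ⟨b, hb, rfl⟩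
    obtain ⟨hinit, him⟩ := init_mem_columnPartitions hb
    have hi : 0 < b (Fin.last l).castSucc :=
      hinit.2.1 ▸ hinit.1 (Fin.lt_def.2 (by simp only [Fin.val_zero, Fin.val_last]; omega))
    refine ⟨_, mem_Ico.2 ⟨hi, him⟩, _, ⟨_, hinit, rfl⟩, ?_⟩
    conv_lhs => rw [← Fin.snoc_init_self b, partitionValue_snoc, hb.2.2]
    rw [partitionValue_eq_mul hinit.1.monotone (hinit.2.2.trans_le (him.le.trans hmn)) m
      (Nat.cast_ne_zero.2 hi.ne')]
    rfl
  · rintro ⟨i, hi, _, ⟨b, hb, rfl⟩, rfl⟩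
    obtain ⟨hi1, him⟩ := mem_Ico.1 hi
    refine ⟨_, snoc_mem_columnPartitions hb him, ?_⟩
    rw [partitionValue_snoc, hb.2.2, partitionValue_eq_mul hb.1.monotone
      (hb.2.2 ▸ (him.le.trans hmn)) m (C := i) (Nat.cast_ne_zero.2 (by omega))]


theorem sSup_partitionValues_succ_of_le {m k : ℕ} (hm : 1 < m) (hmk : m ≤ k) (hmn : m ≤ n) :
    sSup (partitionValues Q m (k + 1)) = (Ico 1 m).sup' (nonempty_Ico.2 hm)
      (fun i => i / m * sSup (partitionValues Q i k) + columnValue Q m i m) := by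
  have hempty {i l : ℕ} (hil : i < l) : partitionValues Q i l = ∅ := by
    rw [partitionValues, columnPartitions_eq_empty hil, Set.image_empty]
  rw [hempty (by omega), Real.sSup_empty, sup'_congr _ rfl fun i hi => by
    rw [hempty (by grind), Real.sSup_empty, mul_zero, zero_add]]
  obtain ⟨m', rfl⟩ : ∃ m', m = m' + 1 := ⟨m - 1, by omega⟩
  refine le_antisymm (le_sup'_of_le _ (mem_Ico.2 ⟨by omega, m'.lt_succ_self⟩) ?_)
    (sup'_le _ _ fun i hi => columnValue_nonpos (mem_Ico.1 hi).2.le hmn (by positivity))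
  exact (columnValue_self_succ (by omega) _).ge

theorem sSup_partitionValues_succ_of_lt {m k : ℕ} (hk : 1 ≤ k) (hm : 1 < m) (hkm : k < m)
    (hmn : m ≤ n) :
    sSup (partitionValues Q m (k + 1)) = (Ico 1 m).sup' (nonempty_Ico.2 hm)
      (fun i => i / m * sSup (partitionValues Q i k) + columnValue Q m i m) := by
  have hbdd : BddAbove (partitionValues Q m (k + 1)) := bddAbove_partitionValues hmn
  have hlast : columnValue Q m k m ∈ partitionValues Q m (k + 1) := by
    have := (mem_partitionValues_succ_iff (Q := Q) hk hmn).2 ⟨k, mem_Ico.2 ⟨hk, hkm⟩, 0,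
      ⟨_, val_mem_columnPartitions k, partitionValue_val (by omega) k⟩, rfl⟩
    rwa [mul_zero, zero_add] at this
  apply le_antisymm
  · refine csSup_le ⟨_, hlast⟩ fun v hv => ?_
    obtain ⟨i, hi, w, hw, rfl⟩ := (mem_partitionValues_succ_iff hk hmn).1 hv
    refine le_sup'_of_le _ hi ?_
    gcongr
    exact le_csSup (bddAbove_partitionValues ((mem_Ico.1 hi).2.le.trans hmn)) hw
  · refine sup'_le _ _ fun i hi => ?_
    obtain ⟨hi1, him⟩ := mem_Ico.1 hi
    rcases lt_or_ge i k with hik | hki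
    · -- there is no partition of `i < k` points into `k` columns, so `F i k` is `sSup ∅ = 0`
      rw [partitionValues, columnPartitions_eq_empty hik, Set.image_empty, Real.sSup_empty,
        mul_zero, zero_add]
      exact (columnValue_mono_left hik.le hkm hmn (by positivity)).trans (le_csSup hbdd hlast)
    · exact Real.mul_csSup_add_le (by positivity) ((columnPartitions_nonempty hk hki).image _)
        (bddAbove_partitionValues (him.le.trans hmn)) hbdd
        fun w hw => (mem_partitionValues_succ_iff hk hmn).2 ⟨i, hi, w, hw, rfl⟩

theorem sSup_partitionValues_succ {m k : ℕ} (hk : 1 ≤ k) (hm : 1 < m) (hmn : m ≤ n) :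
    sSup (partitionValues Q m (k + 1)) = (Ico 1 m).sup' (nonempty_Ico.2 hm)
      (fun i => i / m * sSup (partitionValues Q i k) + columnValue Q m i m) := by
  rcases lt_or_ge k m with hkm | hmk
  · exact sSup_partitionValues_succ_of_lt hk hm hkm hmn
  · exact sSup_partitionValues_succ_of_le hm hmk hmn

end Partitions

theorem stmt0 (n r : ℕ) (Q : Fin n → Fin r)
    (F : ℕ → ℕ → ℝ)
    (hF : ∀ m l : ℕ, F m l = sSup { v : ℝ |
      ∃ b : Fin (l + 1) → ℕ, StrictMono b ∧ b 0 = 0 ∧ b (Fin.last l) = m ∧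
        v = (∑ j : Fin l, Real.negMulLog (((b j.succ : ℝ) - (b j.castSucc : ℝ)) / m))
          - (∑ j : Fin l, ∑ i : Fin r, Real.negMulLog
              (((Finset.univ.filter (fun t : Fin n =>
                  b j.castSucc ≤ (t : ℕ) ∧ (t : ℕ) < b j.succ ∧ Q t = i)).card : ℝ) / m)) })
    (l m : ℕ) (hl : 1 < l) (hm : 1 < m) (hmn : m ≤ n) :
    F m l = (Finset.Ico 1 m).sup' (Finset.nonempty_Ico.mpr hm) (fun i =>
      ((i : ℝ) / m) * F i (l - 1)
        - (((m : ℝ) - i) / m) * (∑ rr : Fin r, Real.negMulLog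
            (((Finset.univ.filter (fun t : Fin n =>
                i ≤ (t : ℕ) ∧ (t : ℕ) < m ∧ Q t = rr)).card : ℝ) / ((m : ℝ) - i)))) := by
  have hS (m l : ℕ) : F m l = sSup (partitionValues Q m l) := by
    rw [hF]
    congr 1
    ext v
    simp only [partitionValues, columnPartitions, partitionValue, columnValue, cellCard,
      Set.mem_image, Set.mem_ofPred_eq, sum_sub_distrib, and_assoc, eq_comm]
  obtain ⟨k, rfl⟩ : ∃ k, l = k + 1 := ⟨l - 1, by omega⟩
  rw [hS, Nat.add_sub_cancel, sSup_partitionValues_succ (by omega) hm hmn]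
  refine sup'_congr _ rfl fun i hi => ?_
  rw [hS, columnValue_eq_neg_mul_sum_negMulLog (mem_Ico.1 hi).2 hmn]
  simp only [cellCard]
  ring
end

section
/- Let X be a random variable on [0,1] with a continuous probability density, let h : [0,1] → [0,1] be differentiable with |h'(x)| ≤ c for all x and some finite constant c, and let Y = h(X). For each integer ℓ ≥ 2, let P_ℓ = ⌊ℓX⌋ and Q_ℓ = ⌊ℓY⌋ be the discretizations of X and Y into ℓ equal-width bins. Then the normalized conditional entropy H(Q_ℓ | P_ℓ)/log ℓ converges to 0 as ℓ → ∞; in particular, conditioned on any single bin of X, the variable Q_ℓ is supported on at most ⌈c⌉ + 1 values. -/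
open MeasureTheory

/-- The discretization of a point `z ∈ [0,1]` into `ℓ` equal-width bins:
`⌊ℓ z⌋`, taking values in `{0, 1, …, ℓ-1}` (with value `ℓ-1` when `z = 1`). -/
noncomputable def bin (ℓ : ℕ) (z : ℝ) : ℕ := min ⌊(ℓ : ℝ) * z⌋₊ (ℓ - 1)

/-!
Points of one bin of `X` lie within `1/ℓ` of each other, so their images under the
`c`-Lipschitz map `h` lie within `c/ℓ`, i.e. in at most `⌈c⌉₊ + 1` consecutive bins. Each
conditional law of `Q_ℓ` given `P_ℓ = k` therefore has at most `⌈c⌉₊ + 1` atoms, hence entropy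
at most `log (⌈c⌉₊ + 1)` by concavity of `negMulLog`, and
`H(Q_ℓ | P_ℓ) / log ℓ ≤ log (⌈c⌉₊ + 1) / log ℓ → 0`.
-/

open Finset Real Filter Topology
open scoped NNReal

lemma measurable_bin (ℓ : ℕ) : Measurable (bin ℓ) :=
  (measurable_id.const_mul _).nat_floor.min measurable_const

lemma bin_lt {ℓ : ℕ} (hℓ : ℓ ≠ 0) (z : ℝ) : bin ℓ z < ℓ := by
  unfold bin; omega

lemma bin_le_mul {ℓ : ℕ} {x : ℝ} (hx : 0 ≤ x) : (bin ℓ x : ℝ) ≤ ℓ * x :=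
  (Nat.cast_le.mpr (min_le_left _ _)).trans (Nat.floor_le (by positivity))

lemma mul_le_bin_add_one {ℓ : ℕ} {x : ℝ} (hx : x ≤ 1) : ℓ * x ≤ bin ℓ x + 1 := by
  unfold bin
  rcases le_total ⌊(ℓ : ℝ) * x⌋₊ (ℓ - 1) with hle | hle
  · rw [min_eq_left hle]
    exact (Nat.lt_floor_add_one _).le
  · rw [min_eq_right hle]
    rcases Nat.eq_zero_or_pos ℓ with rfl | hℓ
    · simp
    · rw [Nat.cast_sub hℓ, Nat.cast_one, sub_add_cancel]
      exact mul_le_of_le_one_right (Nat.cast_nonneg _) hx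

lemma mul_abs_sub_le_one_of_bin_eq {ℓ : ℕ} {x y : ℝ} (hx : x ∈ Set.Icc (0 : ℝ) 1)
    (hy : y ∈ Set.Icc (0 : ℝ) 1) (hxy : bin ℓ x = bin ℓ y) : ℓ * |x - y| ≤ 1 := by
  have hx₀ := bin_le_mul (ℓ := ℓ) hx.1
  have hy₀ := bin_le_mul (ℓ := ℓ) hy.1
  have hx₁ := mul_le_bin_add_one (ℓ := ℓ) hx.2
  have hy₁ := mul_le_bin_add_one (ℓ := ℓ) hy.2
  rw [hxy] at hx₀ hx₁
  rw [mul_comm, ← abs_of_nonneg (Nat.cast_nonneg (α := ℝ) ℓ), ← abs_mul, abs_le]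
  constructor <;> linarith

lemma bin_le_bin_add_ceil (ℓ : ℕ) {y y' c : ℝ} (h : ℓ * y ≤ ℓ * y' + c) :
    bin ℓ y ≤ bin ℓ y' + ⌈c⌉₊ := by
  have hfloor : ⌊(ℓ : ℝ) * y⌋₊ ≤ ⌊(ℓ : ℝ) * y'⌋₊ + ⌈c⌉₊ := by
    rcases le_total 0 ((ℓ : ℝ) * y') with hy' | hy'
    · rw [← Nat.floor_add_natCast hy']
      exact Nat.floor_mono (h.trans (by gcongr; exact Nat.le_ceil c))
    · refine le_add_left (Nat.floor_le_of_le ?_)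
      linarith [Nat.le_ceil c]
  unfold bin
  omega

lemma bin_le_bin_add_ceil_of_lipschitzOnWith {ℓ : ℕ} {K : ℝ≥0} {g : ℝ → ℝ}
    (hg : LipschitzOnWith K g (Set.Icc 0 1)) {x y : ℝ} (hx : x ∈ Set.Icc (0 : ℝ) 1)
    (hy : y ∈ Set.Icc (0 : ℝ) 1) (hxy : bin ℓ x = bin ℓ y) :
    bin ℓ (g x) ≤ bin ℓ (g y) + ⌈(K : ℝ)⌉₊ := by
  apply bin_le_bin_add_ceil
  have hgxy : g x - g y ≤ K * |x - y| := (le_abs_self _).trans (by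
    simpa only [Real.dist_eq] using hg.dist_le_mul x hx y hy)
  calc (ℓ : ℝ) * g x = ℓ * g y + ℓ * (g x - g y) := by ring
    _ ≤ ℓ * g y + ℓ * (K * |x - y|) := by gcongr
    _ = ℓ * g y + K * (ℓ * |x - y|) := by ring
    _ ≤ ℓ * g y + K * 1 := by gcongr; exact mul_abs_sub_le_one_of_bin_eq hx hy hxy
    _ = ℓ * g y + K := by ring

lemma Finset.card_le_of_forall_le_add {S : Finset ℕ} {m : ℕ} (h : ∀ i ∈ S, ∀ j ∈ S, i ≤ j + m) :
    #S ≤ m + 1 := by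
  rcases S.eq_empty_or_nonempty with rfl | hS
  · simp
  calc #S ≤ #(Icc (S.min' hS) (S.min' hS + m)) :=
        card_le_card fun i hi => mem_Icc.mpr ⟨S.min'_le i hi, h i hi _ (S.min'_mem hS)⟩
    _ = m + 1 := by rw [Nat.card_Icc]; omega

lemma sum_negMulLog_le_log_card {ι : Type*} {s : Finset ι} {p : ι → ℝ} (h0 : ∀ i ∈ s, 0 ≤ p i)
    (h1 : ∑ i ∈ s, p i = 1) : ∑ i ∈ s, negMulLog (p i) ≤ log #s := by
  have hs : (0 : ℝ) < #s := by
    rw [Nat.cast_pos, card_pos]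
    exact nonempty_of_sum_ne_zero (h1 ▸ one_ne_zero)
  have hJensen := concaveOn_negMulLog.le_map_sum (t := s) (w := fun _ => (#s : ℝ)⁻¹) (p := p)
    (fun _ _ => by positivity) (by simp [hs.ne']) h0
  simp only [smul_eq_mul, ← mul_sum, h1, mul_one] at hJensen
  rw [negMulLog, log_inv, neg_mul_neg] at hJensen
  exact le_of_mul_le_mul_left hJensen (inv_pos.mpr hs)

lemma sum_negMulLog_le_log_card_support {ι : Type*} {s : Finset ι} {p : ι → ℝ}
    (h0 : ∀ i ∈ s, 0 ≤ p i) (h1 : ∑ i ∈ s, p i = 1) :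
    ∑ i ∈ s, negMulLog (p i) ≤ log #{i ∈ s | p i ≠ 0} := by
  have hsupp {f : ℝ → ℝ} (hf : f 0 = 0) : ∑ i ∈ s with p i ≠ 0, f (p i) = ∑ i ∈ s, f (p i) :=
    sum_filter_of_ne fun i _ hfi hpi => hfi (by rw [hpi, hf])
  rw [← hsupp negMulLog_zero]
  exact sum_negMulLog_le_log_card (fun i hi => h0 i (mem_filter.mp hi).1)
    ((hsupp (f := id) rfl).trans h1)

lemma log_natCast_le_log_natCast {m n : ℕ} (h : m ≤ n) : log m ≤ log n := by
  rcases Nat.eq_zero_or_pos m with rfl | hm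
  · simpa using log_natCast_nonneg n
  · exact log_le_log (Nat.cast_pos.mpr hm) (Nat.cast_le.mpr h)

section DiscreteCondEntropy

variable {Ω ι κ : Type*} [MeasurableSpace Ω]

noncomputable def discreteCondEntropy (μ : Measure Ω) (P : Ω → ι) (Q : Ω → κ) (s : Finset ι)
    (t : Finset κ) : ℝ :=
  ∑ k ∈ s, μ.real {ω | P ω = k} *
    ∑ j ∈ t, negMulLog (μ.real {ω | Q ω = j ∧ P ω = k} / μ.real {ω | P ω = k})

variable {μ : Measure Ω} {P : Ω → ι} {Q : Ω → κ} {s : Finset ι} {t : Finset κ}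

lemma discreteCondEntropy_nonneg [IsFiniteMeasure μ] : 0 ≤ discreteCondEntropy μ P Q s t := by
  refine sum_nonneg fun k _ => mul_nonneg measureReal_nonneg (sum_nonneg fun j _ => ?_)
  refine negMulLog_nonneg (div_nonneg measureReal_nonneg measureReal_nonneg) ?_
  exact div_le_one_of_le₀ (measureReal_mono fun ω hω => hω.2) measureReal_nonneg

variable [MeasurableSpace κ] [MeasurableSingletonClass κ]

lemma sum_measureReal_fiber [IsFiniteMeasure μ] (hQ : Measurable Q) (hQt : ∀ ω, Q ω ∈ t)
    (k : ι) :
    ∑ j ∈ t, μ.real {ω | Q ω = j ∧ P ω = k} = μ.real {ω | P ω = k} := by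
  have hrestr := sum_measureReal_preimage_singleton (μ := μ.restrict {ω | P ω = k}) t
    (fun j _ => hQ (measurableSet_singleton j))
  rw [Set.preimage_eq_univ_iff.mpr (fun _ ⟨ω, hω⟩ => hω ▸ hQt ω), measureReal_restrict_apply_univ]
    at hrestr
  rw [← hrestr]
  refine sum_congr rfl fun j _ => ?_
  rw [measureReal_restrict_apply (hQ (measurableSet_singleton j))]
  rfl

variable [MeasurableSpace ι] [MeasurableSingletonClass ι]

lemma discreteCondEntropy_le_log [IsProbabilityMeasure μ] (hP : Measurable P) (hQ : Measurable Q)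
    (hQt : ∀ ω, Q ω ∈ t) {N : ℕ}
    (hN : ∀ k ∈ s, #{j ∈ t | μ {ω | Q ω = j ∧ P ω = k} ≠ 0} ≤ N) :
    discreteCondEntropy μ P Q s t ≤ log N := by
  have hfiber : ∀ k ∈ s, μ.real {ω | P ω = k} *
      ∑ j ∈ t, negMulLog (μ.real {ω | Q ω = j ∧ P ω = k} / μ.real {ω | P ω = k})
      ≤ μ.real {ω | P ω = k} * log N := by
    intro k hk
    rcases eq_or_ne (μ.real {ω | P ω = k}) 0 with hB | hB
    · simp [hB]
    refine mul_le_mul_of_nonneg_left ?_ measureReal_nonneg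
    have hsupp : ∀ j, μ.real {ω | Q ω = j ∧ P ω = k} / μ.real {ω | P ω = k} ≠ 0 ↔
        μ {ω | Q ω = j ∧ P ω = k} ≠ 0 := fun j => by
      rw [div_ne_zero_iff, measureReal_ne_zero_iff, and_iff_left hB]
    calc _ ≤ log #{j ∈ t | μ.real {ω | Q ω = j ∧ P ω = k} / μ.real {ω | P ω = k} ≠ 0} :=
          sum_negMulLog_le_log_card_support
            (fun j _ => div_nonneg measureReal_nonneg measureReal_nonneg)
            (by rw [← sum_div, sum_measureReal_fiber hQ hQt, div_self hB])
      _ ≤ log N := by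
          simp only [hsupp]
          exact log_natCast_le_log_natCast (hN k hk)
  calc discreteCondEntropy μ P Q s t ≤ ∑ k ∈ s, μ.real {ω | P ω = k} * log N := sum_le_sum hfiber
    _ = μ.real (P ⁻¹' s) * log N := by
        rw [← sum_mul, ← sum_measureReal_preimage_singleton s
          fun k _ => hP (measurableSet_singleton k)]
        rfl
    _ ≤ 1 * log N := mul_le_mul_of_nonneg_right measureReal_le_one (log_natCast_nonneg N)
    _ = log N := one_mul _

end DiscreteCondEntropy

lemma ContinuousOn.measurable_comp_of_forall_mem {Ω α β : Type*} [MeasurableSpace Ω]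
    [TopologicalSpace α] [MeasurableSpace α] [OpensMeasurableSpace α] [TopologicalSpace β]
    [MeasurableSpace β] [BorelSpace β] {g : α → β} {S : Set α} (hg : ContinuousOn g S)
    {X : Ω → α} (hX : Measurable X) (hXS : ∀ ω, X ω ∈ S) : Measurable fun ω => g (X ω) :=
  hg.domRestrict.measurable.comp (hX.subtype_mk (h := hXS))

lemma card_filter_measure_bin_ne_zero_le {Ω : Type*} [MeasurableSpace Ω] (μ : Measure Ω)
    {X : Ω → ℝ} (hX : ∀ ω, X ω ∈ Set.Icc (0 : ℝ) 1) {K : ℝ≥0} {g : ℝ → ℝ}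
    (hg : LipschitzOnWith K g (Set.Icc 0 1)) (ℓ k : ℕ) (t : Finset ℕ) :
    #{j ∈ t | μ {ω | bin ℓ (g (X ω)) = j ∧ bin ℓ (X ω) = k} ≠ 0} ≤ ⌈(K : ℝ)⌉₊ + 1 :=
  card_le_of_forall_le_add fun i hi j hj => by
    obtain ⟨ω, hωi, hωk⟩ := nonempty_of_measure_ne_zero (mem_filter.mp hi).2
    obtain ⟨ω', hω'j, hω'k⟩ := nonempty_of_measure_ne_zero (mem_filter.mp hj).2
    rw [← hωi, ← hω'j]
    exact bin_le_bin_add_ceil_of_lipschitzOnWith hg (hX ω) (hX ω') (hωk.trans hω'k.symm)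

theorem stmt4_general {Ω : Type*} [MeasurableSpace Ω] (μ : Measure Ω) [IsProbabilityMeasure μ]
    (X : Ω → ℝ) (hX : Measurable X) (hXrange : ∀ ω, X ω ∈ Set.Icc (0 : ℝ) 1)
    (h h' : ℝ → ℝ) (c : ℝ)
    (hderiv : ∀ x ∈ Set.Icc (0 : ℝ) 1, HasDerivAt h (h' x) x)
    (hc : ∀ x ∈ Set.Icc (0 : ℝ) 1, |h' x| ≤ c) :
    Filter.Tendsto (fun ℓ : ℕ =>
      (∑ k ∈ Finset.range ℓ, (μ {ω | bin ℓ (X ω) = k}).toReal *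
        ∑ j ∈ Finset.range ℓ, Real.negMulLog
          ((μ {ω | bin ℓ (h (X ω)) = j ∧ bin ℓ (X ω) = k}).toReal
            / (μ {ω | bin ℓ (X ω) = k}).toReal))
        / Real.log ℓ) Filter.atTop (nhds 0)
    ∧ ∀ ℓ : ℕ, 2 ≤ ℓ → ∀ k : ℕ,
        ((Finset.range ℓ).filter fun j =>
          μ {ω | bin ℓ (h (X ω)) = j ∧ bin ℓ (X ω) = k} ≠ 0).card ≤ ⌈c⌉₊ + 1 := by
  have hc0 : 0 ≤ c := (abs_nonneg _).trans (hc 0 ⟨le_rfl, zero_le_one⟩)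
  have hlip : LipschitzOnWith (⟨c, hc0⟩ : ℝ≥0) h (Set.Icc 0 1) :=
    (convex_Icc 0 1).lipschitzOnWith_of_nnnorm_hasDerivWithin_le
      (fun x hx => (hderiv x hx).hasDerivWithinAt)
      fun x hx => NNReal.coe_le_coe.mp (hc x hx)
  have hsupp := card_filter_measure_bin_ne_zero_le μ hXrange hlip
  refine ⟨?_, fun ℓ _ k => hsupp ℓ k _⟩
  have hbound : ∀ ℓ ≠ 0, discreteCondEntropy μ (fun ω => bin ℓ (X ω))
      (fun ω => bin ℓ (h (X ω))) (range ℓ) (range ℓ) ≤ log (⌈c⌉₊ + 1 : ℕ) := fun ℓ hℓ =>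
    discreteCondEntropy_le_log ((measurable_bin ℓ).comp hX)
      ((measurable_bin ℓ).comp (hlip.continuousOn.measurable_comp_of_forall_mem hX hXrange))
      (fun ω => mem_range.mpr (bin_lt hℓ _)) fun k _ => hsupp ℓ k _
  refine squeeze_zero' (Eventually.of_forall fun ℓ => div_nonneg discreteCondEntropy_nonneg
    (log_natCast_nonneg ℓ))
    ((eventually_ne_atTop 0).mono fun ℓ hℓ =>
      div_le_div_of_nonneg_right (hbound ℓ hℓ) (log_natCast_nonneg ℓ)) ?_
  exact tendsto_const_nhds.div_atTop (tendsto_log_atTop.comp tendsto_natCast_atTop_atTop)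

theorem stmt4 {Ω : Type*} [MeasurableSpace Ω] (μ : Measure Ω) [IsProbabilityMeasure μ]
    (X : Ω → ℝ) (hX : Measurable X) (hXrange : ∀ ω, X ω ∈ Set.Icc (0 : ℝ) 1)
    (f : ℝ → ℝ) (hfcont : ContinuousOn f (Set.Icc 0 1))
    (hdens : Measure.map X μ =
      (volume.restrict (Set.Icc (0 : ℝ) 1)).withDensity fun x => ENNReal.ofReal (f x))
    (h h' : ℝ → ℝ) (c : ℝ)
    (hderiv : ∀ x ∈ Set.Icc (0 : ℝ) 1, HasDerivAt h (h' x) x)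
    (hc : ∀ x ∈ Set.Icc (0 : ℝ) 1, |h' x| ≤ c)
    (hrange : ∀ x ∈ Set.Icc (0 : ℝ) 1, h x ∈ Set.Icc (0 : ℝ) 1) :
    Filter.Tendsto (fun ℓ : ℕ =>
      (∑ k ∈ Finset.range ℓ, (μ {ω | bin ℓ (X ω) = k}).toReal *
        ∑ j ∈ Finset.range ℓ, Real.negMulLog
          ((μ {ω | bin ℓ (h (X ω)) = j ∧ bin ℓ (X ω) = k}).toReal
            / (μ {ω | bin ℓ (X ω) = k}).toReal))
        / Real.log ℓ) Filter.atTop (nhds 0)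
    ∧ ∀ ℓ : ℕ, 2 ≤ ℓ → ∀ k : ℕ,
        ((Finset.range ℓ).filter fun j =>
          μ {ω | bin ℓ (h (X ω)) = j ∧ bin ℓ (X ω) = k} ≠ 0).card ≤ ⌈c⌉₊ + 1 :=
  stmt4_general μ X hX hXrange h h' c hderiv hc
end
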